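/- The minorizing function Q satisfies the two defining properties of an MM minorizer: Q(Γ^(τ); Γ) ≤ LB(Γ) for all Γ in the simplex-product domain, and Q(Γ^(τ); Γ^(τ)) = LB(Γ^(τ)), where LB(Γ) = Σ_t [Σ_{i<j} Σ_{k,l} γ_{ik} γ_{jl} c_{t,ij,kl} + Σ_i Σ_k γ_{ik}(log π_k − log γ_{ik})] with each c_{t,ij,kl} ≤ 0 and each γ^(τ)_{ik} > 0, and Q(Γ^(τ); Γ) = Σ_t [Σ_{i<j} Σ_{k,l} (γ_{ik}² γ^(τ)_{jl}/(2γ^(τ)_{ik}) + γ_{jl}² γ^(τ)_{ik}/(2γ^(τ)_{jl})) c_{t,ij,kl} + Σ_i Σ_k γ_{ik}(log π_k − log γ^(τ)_{ik} − γ_{ik}/γ^(τ)_{ik} + 1)]. -/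
import Mathlib


/-- The MM minorizer Q of the variational lower bound LB satisfies
Q(Γ^(τ); Γ) ≤ LB(Γ) on the domain and Q(Γ^(τ); Γ^(τ)) = LB(Γ^(τ)). -/
theorem Q_minorizes_LB
    (n K T : ℕ) (hn : 2 ≤ n) (hK : 1 ≤ K) (hT : 1 ≤ T)
    (c : Fin T → Fin n → Fin n → Fin K → Fin K → ℝ)
    (hc : ∀ t i j k l, c t i j k l ≤ 0)
    (π : Fin K → ℝ) (hπ : ∀ k, 0 < π k)
    (Γτ : Fin n → Fin K → ℝ)
    (hΓτpos : ∀ i k, 0 < Γτ i k) (hΓτsum : ∀ i, (∑ k, Γτ i k) = 1)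
    (LB Q : (Fin n → Fin K → ℝ) → ℝ)
    (hLB : ∀ Γ, LB Γ = ∑ t : Fin T,
      ((∑ p ∈ Finset.univ.filter (fun p : Fin n × Fin n => p.1 < p.2),
          ∑ k, ∑ l, Γ p.1 k * Γ p.2 l * c t p.1 p.2 k l)
        + ∑ i, ∑ k, Γ i k * (Real.log (π k) - Real.log (Γ i k))))
    (hQ : ∀ Γ, Q Γ = ∑ t : Fin T,
      ((∑ p ∈ Finset.univ.filter (fun p : Fin n × Fin n => p.1 < p.2),
          ∑ k, ∑ l,
            (Γ p.1 k ^ 2 * Γτ p.2 l / (2 * Γτ p.1 k)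
              + Γ p.2 l ^ 2 * Γτ p.1 k / (2 * Γτ p.2 l)) * c t p.1 p.2 k l)
        + ∑ i, ∑ k, Γ i k *
            (Real.log (π k) - Real.log (Γτ i k) - Γ i k / Γτ i k + 1))) :
    (∀ Γ : Fin n → Fin K → ℝ,
        (∀ i k, 0 < Γ i k) → (∀ i, (∑ k, Γ i k) = 1) → Q Γ ≤ LB Γ) ∧
    Q Γτ = LB Γτ := by
  have amgm : ∀ a b a' b' : ℝ, 0 < a' → 0 < b' →
      a * b ≤ a ^ 2 * b' / (2 * a') + b ^ 2 * a' / (2 * b') := by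
    intro a b a' b' ha hb
    rw [div_add_div _ _ (by positivity) (by positivity), le_div_iff₀ (by positivity)]
    nlinarith [sq_nonneg (a * b' - b * a'), mul_pos ha hb]
  constructor
  · intro Γ hpos _
    rw [hQ, hLB]
    refine Finset.sum_le_sum fun t _ => add_le_add ?_ ?_
    · refine Finset.sum_le_sum fun p _ => Finset.sum_le_sum fun k _ =>
        Finset.sum_le_sum fun l _ => ?_
      exact mul_le_mul_of_nonpos_right
        (amgm (Γ p.1 k) (Γ p.2 l) (Γτ p.1 k) (Γτ p.2 l) (hΓτpos _ _) (hΓτpos _ _))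
        (hc t p.1 p.2 k l)
    · refine Finset.sum_le_sum fun i _ => Finset.sum_le_sum fun k _ => ?_
      refine mul_le_mul_of_nonneg_left ?_ (le_of_lt (hpos i k))
      have hlog : Real.log (Γ i k / Γτ i k) ≤ Γ i k / Γτ i k - 1 :=
        Real.log_le_sub_one_of_pos (div_pos (hpos i k) (hΓτpos i k))
      rw [Real.log_div (ne_of_gt (hpos i k)) (ne_of_gt (hΓτpos i k))] at hlog
      linarith
  · rw [hQ, hLB]
    refine Finset.sum_congr rfl fun t _ => ?_
    congr 1
    · refine Finset.sum_congr rfl fun p _ => Finset.sum_congr rfl fun k _ =>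
        Finset.sum_congr rfl fun l _ => ?_
      have h1 := ne_of_gt (hΓτpos p.1 k)
      have h2 := ne_of_gt (hΓτpos p.2 l)
      congr 1
      field_simp
      ring
    · refine Finset.sum_congr rfl fun i _ => Finset.sum_congr rfl fun k _ => ?_
      rw [div_self (ne_of_gt (hΓτpos i k))]
      ring
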